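/- Let ζ, ζ', and υ be nonempty finite types, h : ζ → ζ' a function, p a pmf on ζ × υ (the joint law of a pair (Z, Y)), and for each z' ∈ ζ' let q(·|z') be a pmf on υ such that q(y|h(z)) > 0 whenever p(z, y) > 0. Let p' be the pushforward pmf on ζ' × υ defined by p'(z', y) = ∑_{z : h(z) = z'} p(z, y), i.e., the joint law of (h(Z), Y). Then the conditional entropy computed from p' satisfies H(Y | h(Z)) ≤ -∑_{(z,y) : p(z,y) > 0} p(z, y) · log q(y | h(z)). (Proposition 1(ii): taking h(z) = a ∘ z, the coordinatewise masking of z by a fixed binary vector a, this gives H(Y_t | A_t ∘ Z_t) ≤ E_{P_{Z_t|A_t}}[H(P_{Y_t|A_t∘Z_t}, Q_{Y_t|A_t∘Z_t})].) -/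

import Mathlib

/-!
Both sides are sums against the law of `(h Z, Y)`: since `q (h z) y` depends on `z` only through
`h z`, the right-hand side is the cross-entropy `-∑ p'(z', y) log q(y | z')`. The bound is then the
conditional Gibbs inequality, obtained by summing `log x ≤ x - 1` at `x = P(h Z = z') q(y | z') / p'(z', y)`
against `p'`.
-/

open Finset

lemma mul_log_le_mul_log_div_add_sub {a b c : ℝ} (ha : 0 < a) (hb : 0 < b) (hc : 0 < c) :
    a * Real.log b ≤ a * Real.log (a / c) + (c * b - a) := by
  have hlog : Real.log (c * b / a) = Real.log b - Real.log (a / c) := by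
    rw [Real.log_div (by positivity) ha.ne', Real.log_mul hc.ne' hb.ne',
      Real.log_div ha.ne' hc.ne']
    ring
  have key := Real.log_le_sub_one_of_pos (show 0 < c * b / a by positivity)
  rw [hlog] at key
  have hscaled := mul_le_mul_of_nonneg_left key ha.le
  rw [mul_sub, mul_sub, mul_one, mul_div_cancel₀ _ ha.ne'] at hscaled
  linarith

lemma sum_filter_pos_mul_eq_sum {α : Type*} [Fintype α] {f : α → ℝ} (hf : ∀ x, 0 ≤ f x)
    (g : α → ℝ) : ∑ x ∈ univ.filter (fun x => 0 < f x), f x * g x = ∑ x, f x * g x :=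
  sum_filter_of_ne fun x _ hx => (hf x).lt_of_ne (left_ne_zero_of_mul hx).symm

/-- Conditional Gibbs inequality: the conditional entropy of the second coordinate given the first
is at most its conditional cross-entropy against any sub-probability kernel `q`. -/
theorem sum_mul_log_le_sum_mul_log_div_sum {α β : Type*} [Fintype α] [Fintype β]
    {p : α × β → ℝ} (hp0 : ∀ w, 0 ≤ p w) {q : α → β → ℝ} (hq0 : ∀ x y, 0 ≤ q x y)
    (hq1 : ∀ x, ∑ y, q x y ≤ 1) (hqpos : ∀ w, 0 < p w → 0 < q w.1 w.2) :
    ∑ w, p w * Real.log (q w.1 w.2) ≤ ∑ w, p w * Real.log (p w / ∑ y, p (w.1, y)) := by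
  set pFst : α → ℝ := fun x => ∑ y, p (x, y)
  have hpFst0 : ∀ x, 0 ≤ pFst x := fun x => sum_nonneg fun y _ => hp0 _
  have hterm : ∀ w, p w * Real.log (q w.1 w.2)
      ≤ p w * Real.log (p w / pFst w.1) + (pFst w.1 * q w.1 w.2 - p w) := by
    intro w
    rcases (hp0 w).eq_or_lt with hw | hw
    · simp [← hw, mul_nonneg (hpFst0 w.1) (hq0 w.1 w.2)]
    · have hpFst : 0 < pFst w.1 :=
        hw.trans_le (single_le_sum (fun y _ => hp0 (w.1, y)) (mem_univ w.2))
      exact mul_log_le_mul_log_div_add_sub hw (hqpos w hw) hpFst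
  have hmass : ∑ w : α × β, pFst w.1 * q w.1 w.2 ≤ ∑ w, p w := by
    simp only [Fintype.sum_prod_type, ← mul_sum]
    exact sum_le_sum fun x _ => mul_le_of_le_one_right (hpFst0 x) (hq1 x)
  calc ∑ w, p w * Real.log (q w.1 w.2)
      ≤ ∑ w, (p w * Real.log (p w / pFst w.1) + (pFst w.1 * q w.1 w.2 - p w)) :=
        sum_le_sum fun w _ => hterm w
    _ = ∑ w, p w * Real.log (p w / pFst w.1)
          + (∑ w : α × β, pFst w.1 * q w.1 w.2 - ∑ w, p w) := by
        rw [sum_add_distrib, sum_sub_distrib]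
    _ ≤ ∑ w, p w * Real.log (p w / pFst w.1) := by linarith

section Pushforward

variable {ζ ζ' υ : Type*} [Fintype ζ] [DecidableEq ζ']
  {h : ζ → ζ'} {p : ζ × υ → ℝ} {p' : ζ' × υ → ℝ}

lemma sum_mul_comp_eq_sum_pushforward [Fintype ζ'] [Fintype υ]
    (hp' : ∀ w : ζ' × υ, p' w = ∑ z ∈ univ.filter (fun z : ζ => h z = w.1), p (z, w.2))
    (f : ζ' × υ → ℝ) : ∑ zy, p zy * f (h zy.1, zy.2) = ∑ w, p' w * f w := by
  rw [Fintype.sum_prod_type, Fintype.sum_prod_type,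
    ← sum_fiberwise univ h (fun z => ∑ y, p (z, y) * f (h z, y))]
  refine sum_congr rfl fun z' _ => ?_
  rw [sum_congr rfl fun z hz => by rw [(mem_filter.mp hz).2], sum_comm]
  exact sum_congr rfl fun y _ => by rw [hp' (z', y), sum_mul]

lemma exists_pos_of_pushforward_pos (hp0 : ∀ a, 0 ≤ p a)
    (hp' : ∀ w : ζ' × υ, p' w = ∑ z ∈ univ.filter (fun z : ζ => h z = w.1), p (z, w.2))
    {w : ζ' × υ} (hw : 0 < p' w) : ∃ z, h z = w.1 ∧ 0 < p (z, w.2) := by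
  rw [hp' w] at hw
  obtain ⟨z, hz, hzne⟩ := exists_ne_zero_of_sum_ne_zero hw.ne'
  exact ⟨z, (mem_filter.mp hz).2, (hp0 _).lt_of_ne hzne.symm⟩

end Pushforward

theorem conditional_entropy_pushforward_le_cross_entropy_general
    {ζ ζ' υ : Type*} [Fintype ζ] [Fintype ζ'] [Fintype υ]
    [DecidableEq ζ']
    (h : ζ → ζ')
    (p : ζ × υ → ℝ) (hp0 : ∀ a, 0 ≤ p a)
    (q : ζ' → υ → ℝ) (hq0 : ∀ z' y, 0 ≤ q z' y) (hq1 : ∀ z', ∑ y, q z' y = 1)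
    (hqpos : ∀ z y, 0 < p (z, y) → 0 < q (h z) y)
    (p' : ζ' × υ → ℝ)
    (hp' : ∀ w : ζ' × υ,
      p' w = ∑ z ∈ Finset.univ.filter (fun z : ζ => h z = w.1), p (z, w.2)) :
    -∑ w ∈ Finset.univ.filter (fun w : ζ' × υ => 0 < p' w),
        p' w * Real.log (p' w / ∑ y', p' (w.1, y'))
      ≤ -∑ zy ∈ Finset.univ.filter (fun zy : ζ × υ => 0 < p zy),
          p zy * Real.log (q (h zy.1) zy.2) := by
  have hp'0 : ∀ w, 0 ≤ p' w := fun w => (hp' w).symm ▸ sum_nonneg fun z _ => hp0 _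
  have hqpos' : ∀ w : ζ' × υ, 0 < p' w → 0 < q w.1 w.2 := fun w hw => by
    obtain ⟨z, hzw, hz⟩ := exists_pos_of_pushforward_pos hp0 hp' hw
    exact hzw ▸ hqpos z w.2 hz
  rw [sum_filter_pos_mul_eq_sum hp'0, sum_filter_pos_mul_eq_sum hp0,
    sum_mul_comp_eq_sum_pushforward hp' fun w => Real.log (q w.1 w.2), neg_le_neg_iff]
  exact sum_mul_log_le_sum_mul_log_div_sum hp'0 hq0 (fun z' => (hq1 z').le) hqpos'

/-- Proposition 1(ii): variational upper bound on the conditional entropy of `Y`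
given a function `h` of `Z`. With `p` the joint law of `(Z, Y)` and `p'` the
pushforward joint law of `(h(Z), Y)`, the conditional entropy `H(Y | h(Z))`
(computed from `p'`) is bounded above by the expected conditional cross-entropy
of any variational family `q (·|z')` that is positive wherever required. -/
theorem conditional_entropy_pushforward_le_cross_entropy
    {ζ ζ' υ : Type*} [Fintype ζ] [Fintype ζ'] [Fintype υ]
    [Nonempty ζ] [Nonempty ζ'] [Nonempty υ] [DecidableEq ζ']
    (h : ζ → ζ')
    (p : ζ × υ → ℝ) (hp0 : ∀ a, 0 ≤ p a) (hp1 : ∑ a, p a = 1)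
    (q : ζ' → υ → ℝ) (hq0 : ∀ z' y, 0 ≤ q z' y) (hq1 : ∀ z', ∑ y, q z' y = 1)
    (hqpos : ∀ z y, 0 < p (z, y) → 0 < q (h z) y)
    (p' : ζ' × υ → ℝ)
    (hp' : ∀ w : ζ' × υ,
      p' w = ∑ z ∈ Finset.univ.filter (fun z : ζ => h z = w.1), p (z, w.2)) :
    -∑ w ∈ Finset.univ.filter (fun w : ζ' × υ => 0 < p' w),
        p' w * Real.log (p' w / ∑ y', p' (w.1, y'))
      ≤ -∑ zy ∈ Finset.univ.filter (fun zy : ζ × υ => 0 < p zy),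
          p zy * Real.log (q (h zy.1) zy.2) :=
  conditional_entropy_pushforward_le_cross_entropy_general h p hp0 q hq0 hq1 hqpos p' hp'
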